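/- arXiv:2507.01150 — 3 statements merged into one kernel-verified Lean document; each statement's English description precedes it below -/
import Mathlib

section
/- Let H be a real Hilbert space and β > 0. The map F : H → H defined by F(x) = x / (1 + β ‖x‖) is monotone: ⟨F(x) − F(y), x − y⟩ ≥ 0 for all x, y ∈ H. -/
/-!
Expanding the inner product and applying Cauchy–Schwarz to `⟪x, y⟫` gives
`⟪F x - F y, x - y⟫ ≥ (‖x‖ - ‖y‖) * (f ‖x‖ - f ‖y‖)` with `f r = r / (1 + β r)`,
which is nonnegative because `f` is increasing on `[0, ∞)`.
-/

open scoped RealInnerProductSpace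

open Set

theorem mul_sub_le_inner_smul_sub_smul {H : Type*} [NormedAddCommGroup H]
    [InnerProductSpace ℝ H] {a b : ℝ} (ha : 0 ≤ a) (hb : 0 ≤ b) (x y : H) :
    (‖x‖ - ‖y‖) * (a * ‖x‖ - b * ‖y‖) ≤ ⟪a • x - b • y, x - y⟫ := by
  have hexpand : ⟪a • x - b • y, x - y⟫
      = a * (‖x‖ * ‖x‖) + b * (‖y‖ * ‖y‖) - (a + b) * ⟪x, y⟫ := by
    simp only [inner_sub_left, inner_sub_right, real_inner_smul_left,
      real_inner_self_eq_norm_mul_norm, real_inner_comm y x]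
    ring
  rw [hexpand]
  nlinarith [mul_le_mul_of_nonneg_left (real_inner_le_norm x y) (add_nonneg ha hb)]

theorem inner_radial_sub_nonneg {H : Type*} [NormedAddCommGroup H] [InnerProductSpace ℝ H]
    {φ : ℝ → ℝ} (hφ : ∀ r, 0 ≤ r → 0 ≤ φ r) (hmono : MonotoneOn (fun r ↦ r * φ r) (Ici 0))
    (x y : H) : 0 ≤ ⟪φ ‖x‖ • x - φ ‖y‖ • y, x - y⟫ := by
  refine le_trans ?_ (mul_sub_le_inner_smul_sub_smul (hφ _ (norm_nonneg x))
    (hφ _ (norm_nonneg y)) x y)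
  have hx : ‖x‖ ∈ Ici (0 : ℝ) := norm_nonneg x
  have hy : ‖y‖ ∈ Ici (0 : ℝ) := norm_nonneg y
  rcases le_total ‖x‖ ‖y‖ with hxy | hyx
  · exact mul_nonneg_of_nonpos_of_nonpos (sub_nonpos.2 hxy)
      (sub_nonpos.2 (by simpa [mul_comm] using hmono hx hy hxy))
  · exact mul_nonneg (sub_nonneg.2 hyx)
      (sub_nonneg.2 (by simpa [mul_comm] using hmono hy hx hyx))

theorem monotoneOn_mul_inv_one_add_mul {β : ℝ} (hβ : 0 ≤ β) :
    MonotoneOn (fun r : ℝ ↦ r * (1 + β * r)⁻¹) (Ici 0) := by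
  intro r hr s hs hrs
  have hr' : 0 < 1 + β * r := by have : (0 : ℝ) ≤ r := hr; positivity
  have hs' : 0 < 1 + β * s := by have : (0 : ℝ) ≤ s := hs; positivity
  simp only [← div_eq_mul_inv]
  rw [div_le_div_iff₀ hr' hs']
  nlinarith

theorem stmt_5_general {H : Type*} [NormedAddCommGroup H] [InnerProductSpace ℝ H]
    (β : ℝ) (hβ : 0 < β) :
    ∀ x y : H,
      0 ≤ ⟪(1 + β * ‖x‖)⁻¹ • x - (1 + β * ‖y‖)⁻¹ • y, x - y⟫ :=
  inner_radial_sub_nonneg (φ := fun r ↦ (1 + β * r)⁻¹)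
    (fun r hr ↦ by positivity) (monotoneOn_mul_inv_one_add_mul hβ.le)

/-- The strain-limiting map `F(x) = x/(1 + β‖x‖)` on a real Hilbert space is
monotone. -/
theorem stmt_5 {H : Type*} [NormedAddCommGroup H] [InnerProductSpace ℝ H]
    [CompleteSpace H] (β : ℝ) (hβ : 0 < β) :
    ∀ x y : H,
      0 ≤ ⟪(1 + β * ‖x‖)⁻¹ • x - (1 + β * ‖y‖)⁻¹ • y, x - y⟫ :=
  stmt_5_general β hβ
end

section
/- Let H be a real Hilbert space and β > 0. The map F(x) = x / (1 + β ‖x‖) on H is injective: F(x) = F(y) implies x = y. -/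
/-! Taking norms in `F x = F y` gives `‖x‖ / (1 + β‖x‖) = ‖y‖ / (1 + β‖y‖)`, and `t ↦ t / (1 + βt)`
is injective on `[0, ∞)`, so `‖x‖ = ‖y‖`; then `x` and `y` are the same positive multiple of
`F x = F y`. -/

lemma eq_of_div_one_add_mul_eq {β s t : ℝ} (hβ : 0 ≤ β) (hs : 0 ≤ s) (ht : 0 ≤ t)
    (h : s / (1 + β * s) = t / (1 + β * t)) : s = t := by
  rw [div_eq_div_iff (by positivity) (by positivity)] at h
  linarith

lemma norm_inv_one_add_mul_norm_smul {E : Type*} [NormedAddCommGroup E] [NormedSpace ℝ E]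
    {β : ℝ} (hβ : 0 ≤ β) (x : E) :
    ‖(1 + β * ‖x‖)⁻¹ • x‖ = ‖x‖ / (1 + β * ‖x‖) := by
  rw [norm_smul, norm_inv, Real.norm_of_nonneg (by positivity), inv_mul_eq_div]

theorem injective_inv_one_add_mul_norm_smul {E : Type*} [NormedAddCommGroup E]
    [NormedSpace ℝ E] {β : ℝ} (hβ : 0 ≤ β) :
    Function.Injective (fun x : E => (1 + β * ‖x‖)⁻¹ • x) := by
  intro x y h
  have hnorm : ‖x‖ = ‖y‖ := by
    refine eq_of_div_one_add_mul_eq hβ (norm_nonneg x) (norm_nonneg y) ?_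
    rw [← norm_inv_one_add_mul_norm_smul hβ, ← norm_inv_one_add_mul_norm_smul hβ]
    exact congrArg norm h
  simp only [hnorm] at h
  exact smul_right_injective E (by positivity) h

theorem stmt_6_general {H : Type*} [NormedAddCommGroup H] [InnerProductSpace ℝ H]
    (β : ℝ) (hβ : 0 < β) :
    Function.Injective (fun x : H => (1 + β * ‖x‖)⁻¹ • x) :=
  injective_inv_one_add_mul_norm_smul hβ.le

/-- The strain-limiting map `F(x) = x/(1 + β‖x‖)` on a real Hilbert space is
injective. -/
theorem stmt_6 {H : Type*} [NormedAddCommGroup H] [InnerProductSpace ℝ H]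
    [CompleteSpace H] (β : ℝ) (hβ : 0 < β) :
    Function.Injective (fun x : H => (1 + β * ‖x‖)⁻¹ • x) :=
  stmt_6_general β hβ
end

section
/- Let H be a real Hilbert space and β > 0. The map F(x) = x / (1 + β‖x‖) satisfies the following strengthened monotonicity on bounded sets: for all x, y in the closed ball of radius R, ⟨F(x) − F(y), x − y⟩ ≥ ‖x − y‖² / (1 + βR)². -/
/-!
Write `a = 1 + β‖x‖`, `b = 1 + β‖y‖`. Splitting `a⁻¹x - b⁻¹y = a⁻¹(x - y) + (a⁻¹ - b⁻¹)y` and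
using `|a⁻¹ - b⁻¹| ≤ β‖x - y‖/(ab)` with Cauchy–Schwarz gives
`⟪F x - F y, x - y⟫ ≥ ‖x - y‖²(b - β‖y‖)/(ab) = ‖x - y‖²/(ab)`, and `ab ≤ (1 + βR)²` on the ball.
-/

open scoped RealInnerProductSpace

lemma abs_inv_one_add_mul_norm_sub_le {E : Type*} [SeminormedAddCommGroup E] {β : ℝ}
    (hβ : 0 ≤ β) (x y : E) :
    |(1 + β * ‖x‖)⁻¹ - (1 + β * ‖y‖)⁻¹| ≤
      β * ‖x - y‖ / ((1 + β * ‖x‖) * (1 + β * ‖y‖)) := by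
  have ha : 0 < 1 + β * ‖x‖ := by positivity
  have hb : 0 < 1 + β * ‖y‖ := by positivity
  have hdiff : (1 + β * ‖x‖)⁻¹ - (1 + β * ‖y‖)⁻¹ =
      β * (‖y‖ - ‖x‖) / ((1 + β * ‖x‖) * (1 + β * ‖y‖)) := by
    field_simp
    ring
  rw [hdiff, abs_div, abs_mul, abs_of_nonneg hβ, abs_of_pos (mul_pos ha hb),
    norm_sub_rev x y]
  gcongr
  exact abs_norm_sub_norm_le y x

section StrainLimiting

variable {H : Type*} [NormedAddCommGroup H] [InnerProductSpace ℝ H]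

lemma inner_smul_sub_smul_sub_self (s t : ℝ) (x y : H) :
    ⟪s • x - t • y, x - y⟫ = s * ‖x - y‖ ^ 2 + (s - t) * ⟪y, x - y⟫ := by
  have hsplit : s • x - t • y = s • (x - y) + (s - t) • y := by module
  rw [hsplit, inner_add_left, real_inner_smul_left, real_inner_smul_left,
    real_inner_self_eq_norm_sq]

lemma sq_norm_sub_div_le_inner_inv_one_add_mul_norm_smul_sub {β : ℝ} (hβ : 0 ≤ β)
    (x y : H) :
    ‖x - y‖ ^ 2 / ((1 + β * ‖x‖) * (1 + β * ‖y‖)) ≤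
      ⟪(1 + β * ‖x‖)⁻¹ • x - (1 + β * ‖y‖)⁻¹ • y, x - y⟫ := by
  set a := 1 + β * ‖x‖
  set b := 1 + β * ‖y‖
  have ha : 0 < a := by positivity
  have hb : 0 < b := by positivity
  have hcross : -(β * ‖x - y‖ / (a * b) * (‖y‖ * ‖x - y‖)) ≤ (a⁻¹ - b⁻¹) * ⟪y, x - y⟫ := by
    refine neg_le_of_abs_le ?_
    rw [abs_mul]
    exact mul_le_mul (abs_inv_one_add_mul_norm_sub_le hβ x y)
      (abs_real_inner_le_norm y (x - y)) (abs_nonneg _) (by positivity)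
  have hcancel : ‖x - y‖ ^ 2 / (a * b) =
      a⁻¹ * ‖x - y‖ ^ 2 - β * ‖x - y‖ / (a * b) * (‖y‖ * ‖x - y‖) := by
    field_simp
    ring
  rw [inner_smul_sub_smul_sub_self, hcancel]
  linarith

end StrainLimiting

theorem stmt_17_general {H : Type*} [NormedAddCommGroup H] [InnerProductSpace ℝ H]
    (β R : ℝ) (hβ : 0 < β) :
    ∀ x y : H, ‖x‖ ≤ R → ‖y‖ ≤ R →
      ‖x - y‖ ^ 2 / (1 + β * R) ^ 2 ≤
        ⟪(1 + β * ‖x‖)⁻¹ • x - (1 + β * ‖y‖)⁻¹ • y, x - y⟫ := by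
  intro x y hx hy
  have hR : 0 ≤ R := (norm_nonneg x).trans hx
  have hprod : (1 + β * ‖x‖) * (1 + β * ‖y‖) ≤ (1 + β * R) ^ 2 := by
    rw [sq]
    gcongr
  calc ‖x - y‖ ^ 2 / (1 + β * R) ^ 2
      ≤ ‖x - y‖ ^ 2 / ((1 + β * ‖x‖) * (1 + β * ‖y‖)) := by gcongr
    _ ≤ _ := sq_norm_sub_div_le_inner_inv_one_add_mul_norm_smul_sub hβ.le x y

/-- Local strong monotonicity of `F(x) = x/(1 + β‖x‖)` on bounded sets: for
`x, y` in the closed ball of radius `R`,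
`⟪F x − F y, x − y⟫ ≥ ‖x − y‖²/(1 + βR)²`. -/
theorem stmt_17 {H : Type*} [NormedAddCommGroup H] [InnerProductSpace ℝ H]
    [CompleteSpace H] (β R : ℝ) (hβ : 0 < β) :
    ∀ x y : H, ‖x‖ ≤ R → ‖y‖ ≤ R →
      ‖x - y‖ ^ 2 / (1 + β * R) ^ 2 ≤
        ⟪(1 + β * ‖x‖)⁻¹ • x - (1 + β * ‖y‖)⁻¹ • y, x - y⟫ :=
  stmt_17_general β R hβ
end
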